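/- If uₙ = Sₙ₋₂Sₙ₊₁/(Sₙ₋₁Sₙ) where (Sₙ) is any sequence of nonzero rationals satisfying Sₙ₊₅Sₙ = Sₙ₊₄Sₙ₊₁ + Sₙ₊₃Sₙ₊₂, then uₙ₊₁uₙ₋₁ = 1 + 1/uₙ for all n; in particular the point (uₙ, uₙ₊₁) lies on the biquadratic curve U²V + UV² - J·UV + U + V + 1 = 0 where J = u₀+u₁+1/u₀+1/u₁+1/(u₀u₁). -/

import Mathlib

/-!
Dividing the Somos-5 relation at index n - 3 by Sₙ₋₂Sₙ₊₁ turns it into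
uₙ₊₁uₙ₋₁ = 1 + 1/uₙ. For this map (x, y) ↦ (y, (1 + 1/y)/x) the quantity
x + y + 1/x + 1/y + 1/(xy) is invariant, so it equals J along the whole orbit, and
multiplying the identity "invariant = J" by xy gives the equation of the curve.
-/

section QRT

variable {K : Type*} [Field K]

def qrtInvariant (x y : K) : K := x + y + 1 / x + 1 / y + 1 / (x * y)

theorem somos5_ratio_mul_ratio {a b c d e f : K} (hb : b ≠ 0) (hc : c ≠ 0)
    (hd : d ≠ 0) (he : e ≠ 0) (h : f * a = e * b + d * c) :
    c * f / (d * e) * (a * d / (b * c)) = 1 + 1 / (b * e / (c * d)) := by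
  field_simp
  linear_combination h

theorem qrtInvariant_eq_of_mul_eq {x y z : K} (hx : x ≠ 0) (hy : y ≠ 0) (hz : z ≠ 0)
    (h : z * x = 1 + 1 / y) : qrtInvariant x y = qrtInvariant y z := by
  have h' : z * x * y = y + 1 := by
    field_simp at h
    linear_combination h
  unfold qrtInvariant
  field_simp
  linear_combination (x - z) * h'

theorem qrtInvariant_curve {x y : K} (hx : x ≠ 0) (hy : y ≠ 0) :
    x ^ 2 * y + x * y ^ 2 - qrtInvariant x y * (x * y) + x + y + 1 = 0 := by
  unfold qrtInvariant
  field_simp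
  ring

theorem qrtInvariant_eq_of_recurrence {u : ℤ → K} (hu : ∀ n, u n ≠ 0)
    (hrec : ∀ n, u (n + 1) * u (n - 1) = 1 + 1 / u n) (n : ℤ) :
    qrtInvariant (u n) (u (n + 1)) = qrtInvariant (u 0) (u 1) := by
  have hper : Function.Periodic (fun n => qrtInvariant (u n) (u (n + 1))) 1 := fun m => by
    have h := hrec (m + 1)
    rw [add_sub_cancel_right] at h
    show qrtInvariant (u (m + 1)) (u (m + 1 + 1)) = qrtInvariant (u m) (u (m + 1))
    exact (qrtInvariant_eq_of_mul_eq (hu _) (hu _) (hu _) h).symm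
  simpa using hper.int_mul_eq n

end QRT

/-- The ratios uₙ = Sₙ₋₂Sₙ₊₁/(Sₙ₋₁Sₙ) of a Somos-5 sequence satisfy the QRT
recurrence uₙ₊₁uₙ₋₁ = 1 + 1/uₙ, and each point (uₙ, uₙ₊₁) lies on the
biquadratic curve U²V + UV² - J·UV + U + V + 1 = 0. -/
theorem somos5_to_qrt (S : ℤ → ℚ) (hne : ∀ n, S n ≠ 0)
    (hrec : ∀ n : ℤ, S (n + 5) * S n = S (n + 4) * S (n + 1) + S (n + 3) * S (n + 2)) :
    let u : ℤ → ℚ := fun n => S (n - 2) * S (n + 1) / (S (n - 1) * S n)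
    let J : ℚ := u 0 + u 1 + 1 / u 0 + 1 / u 1 + 1 / (u 0 * u 1)
    (∀ n : ℤ, u (n + 1) * u (n - 1) = 1 + 1 / u n) ∧
    (∀ n : ℤ, (u n) ^ 2 * u (n + 1) + u n * (u (n + 1)) ^ 2 - J * (u n * u (n + 1))
      + u n + u (n + 1) + 1 = 0) := by
  intro u J
  have hu : ∀ n, u n ≠ 0 := fun n => by simp [u, hne]
  have hqrt : ∀ n, u (n + 1) * u (n - 1) = 1 + 1 / u n := fun n => by
    have h := hrec (n - 3)
    simp only [u]
    convert somos5_ratio_mul_ratio (hne _) (hne _) (hne _) (hne _) h using 5 <;> ring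
  refine ⟨hqrt, fun n => ?_⟩
  have hJ : qrtInvariant (u n) (u (n + 1)) = J := qrtInvariant_eq_of_recurrence hu hqrt n
  rw [← hJ]
  exact qrtInvariant_curve (hu n) (hu (n + 1))
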